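/- Let X be the adjunction of two manifolds M_1 and M_2 along a proper nonempty open set A with nonempty boundary, so that X is non-Hausdorff. Then there is no partition of unity subordinate to the open cover {M_1, M_2} of X: there do not exist continuous functions ρ_1, ρ_2 : X → ℝ with ρ_1 + ρ_2 = 1, ρ_i ≥ 0, and supp(ρ_i) ⊆ φ_i(M_i). -/
import Mathlib


open Topology

/-- A space is locally Euclidean of dimension `d` if every point has an open neighbourhood
homeomorphic to an open subset of `ℝ^d`. -/
def LocallyEuclidean (d : ℕ) (X : Type*) [TopologicalSpace X] : Prop :=
  ∀ x : X, ∃ (U : Set X) (V : Set (EuclideanSpace ℝ (Fin d))),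
    IsOpen U ∧ x ∈ U ∧ IsOpen V ∧ Nonempty (↥U ≃ₜ ↥V)

variable {M₁ M₂ : Type*} [TopologicalSpace M₁] [TopologicalSpace M₂]

/-- The relation identifying `a ∈ A ⊆ M₁` with `f a ∈ M₂`. -/
inductive GlueRel (A : Set M₁) (f : ↥A → M₂) : (M₁ ⊕ M₂) → (M₁ ⊕ M₂) → Prop
  | glue (a : M₁) (ha : a ∈ A) : GlueRel A f (Sum.inl a) (Sum.inr (f ⟨a, ha⟩))

/-- The binary adjunction space `X = M₁ ∪_f M₂`, with the quotient topology. -/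
abbrev GlueSpace (A : Set M₁) (f : ↥A → M₂) := Quot (GlueRel A f)

/-- The canonical map `φ₁ : M₁ → X`. -/
def phi1 (A : Set M₁) (f : ↥A → M₂) (x : M₁) : GlueSpace A f := Quot.mk _ (Sum.inl x)

/-- The canonical map `φ₂ : M₂ → X`. -/
def phi2 (A : Set M₁) (f : ↥A → M₂) (y : M₂) : GlueSpace A f := Quot.mk _ (Sum.inr y)

/-- Two points are Hausdorff-inseparable if every pair of (open) neighbourhoods of the
respective points intersect. -/
def HausdorffInseparable {X : Type*} [TopologicalSpace X] (p q : X) : Prop :=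
  ∀ U V : Set X, IsOpen U → IsOpen V → p ∈ U → q ∈ V → (U ∩ V).Nonempty

open Classical in
/-- A discriminating map on the sum that respects the glue relation. -/
noncomputable def glueDiscr (A : Set M₁) (f : ↥A → M₂) : M₁ ⊕ M₂ → M₁ ⊕ M₂
  | Sum.inl x => if h : x ∈ A then Sum.inr (f ⟨x, h⟩) else Sum.inl x
  | Sum.inr y => Sum.inr y

noncomputable def glueDiscrQ (A : Set M₁) (f : ↥A → M₂) : GlueSpace A f → M₁ ⊕ M₂ :=
  Quot.lift (glueDiscr A f) (by
    rintro _ _ ⟨a, ha⟩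
    simp [glueDiscr, ha])

lemma phi1_not_in_range_phi2 (A : Set M₁) (f : ↥A → M₂) {x : M₁} (hx : x ∉ A) :
    phi1 A f x ∉ Set.range (phi2 A f) := by
  rintro ⟨y, hy⟩
  have := congrArg (glueDiscrQ A f) hy
  simp [glueDiscrQ, phi1, phi2, glueDiscr, hx] at this

lemma phi2_not_in_range_phi1 (A : Set M₁) (f : ↥A → M₂) {y : M₂}
    (hy : y ∉ Set.range f) : phi2 A f y ∉ Set.range (phi1 A f) := by
  rintro ⟨x, hx⟩
  have h := congrArg (glueDiscrQ A f) hx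
  by_cases hxA : x ∈ A
  · simp only [glueDiscrQ, phi1, phi2, glueDiscr, hxA, dif_pos] at h
    exact hy ⟨⟨x, hxA⟩, (Sum.inr.inj h)⟩
  · simp [glueDiscrQ, phi1, phi2, glueDiscr, hxA] at h

/-- For the non-Hausdorff binary adjunction of two manifolds along a proper
nonempty open set `A` with nonempty boundary, there is no partition of unity subordinate to
the open cover `{φ₁(M₁), φ₂(M₂)}`: there are no continuous `ρ₁ ρ₂ : X → ℝ` with
`ρ₁ + ρ₂ = 1`, `ρᵢ ≥ 0`, and `supp ρᵢ ⊆ φᵢ(Mᵢ)`. -/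
theorem stmt6 (d : ℕ) [T2Space M₁] [T2Space M₂]
    [SecondCountableTopology M₁] [SecondCountableTopology M₂]
    (hM₁ : LocallyEuclidean d M₁) (hM₂ : LocallyEuclidean d M₂)
    (A : Set M₁) (hA : IsOpen A) (hne : A.Nonempty) (hproper : A ≠ Set.univ)
    (hfront : (frontier A).Nonempty)
    (f : ↥A → M₂) (hf : IsOpenEmbedding f)
    (fbar : ↥(closure A) ≃ₜ ↥(closure (Set.range f)))
    (hfbar : ∀ (a : M₁) (ha : a ∈ A), (fbar ⟨a, subset_closure ha⟩ : M₂) = f ⟨a, ha⟩) :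
    ¬ ∃ ρ₁ ρ₂ : GlueSpace A f → ℝ,
        Continuous ρ₁ ∧ Continuous ρ₂ ∧
        (∀ x, ρ₁ x + ρ₂ x = 1) ∧ (∀ x, 0 ≤ ρ₁ x) ∧ (∀ x, 0 ≤ ρ₂ x) ∧
        tsupport ρ₁ ⊆ Set.range (phi1 A f) ∧ tsupport ρ₂ ⊆ Set.range (phi2 A f) := by
  rintro ⟨ρ₁, ρ₂, hc₁, hc₂, hsum, hρ₁0, hρ₂0, hs₁, hs₂⟩
  obtain ⟨b, hb⟩ := hfront
  rw [hA.frontier_eq] at hb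
  obtain ⟨hbcl, hbA⟩ := hb
  -- the two inseparable points
  set p := phi1 A f b with hp
  set q := phi2 A f (fbar ⟨b, hbcl⟩ : M₂) with hq
  -- fbar b is not in the range of f
  have hqf : (fbar ⟨b, hbcl⟩ : M₂) ∉ Set.range f := by
    rintro ⟨⟨a, ha⟩, hfa⟩
    have : fbar ⟨a, subset_closure ha⟩ = fbar ⟨b, hbcl⟩ := by
      apply Subtype.ext
      rw [hfbar a ha, hfa]
    have := fbar.injective this
    have hab : a = b := Subtype.ext_iff.mp this
    exact hbA (hab ▸ ha)
  -- values of ρ₁ at p and q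
  have hρ₂p : ρ₂ p = 0 :=
    image_eq_zero_of_notMem_tsupport
      (fun h => phi1_not_in_range_phi2 A f hbA (hs₂ h))
  have hρ₁p : ρ₁ p = 1 := by have := hsum p; linarith
  have hρ₁q : ρ₁ q = 0 :=
    image_eq_zero_of_notMem_tsupport
      (fun h => phi2_not_in_range_phi1 A f hqf (hs₁ h))
  -- p and q are Hausdorff-inseparable
  have hcont1 : Continuous (phi1 A f) := continuous_quot_mk.comp continuous_inl
  have hcont2 : Continuous (phi2 A f) := continuous_quot_mk.comp continuous_inr
  have hins : HausdorffInseparable p q := by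
    intro U V hU hV hpU hqV
    have hU₁ : IsOpen (phi1 A f ⁻¹' U) := hU.preimage hcont1
    have hV₂ : IsOpen (phi2 A f ⁻¹' V) := hV.preimage hcont2
    -- pull back V₂ through fbar to a relatively open set around b
    have hW : IsOpen ((fun z : ↥(closure A) => (fbar z : M₂)) ⁻¹' (phi2 A f ⁻¹' V)) :=
      hV₂.preimage (continuous_subtype_val.comp fbar.continuous)
    obtain ⟨O, hO, hOW⟩ := isOpen_induced_iff.mp hW
    have hbO : b ∈ O := by
      have : (⟨b, hbcl⟩ : ↥(closure A)) ∈ Subtype.val ⁻¹' O := by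
        rw [hOW]; exact hqV
      exact this
    -- b ∈ closure A, so the open nbhd O ∩ U₁ meets A
    have hmeet : ((O ∩ phi1 A f ⁻¹' U) ∩ A).Nonempty := by
      exact mem_closure_iff.mp hbcl _ (hO.inter hU₁) ⟨hbO, hpU⟩
    obtain ⟨a, ⟨haO, haU⟩, haA⟩ := hmeet
    have haV : f ⟨a, haA⟩ ∈ phi2 A f ⁻¹' V := by
      have : (⟨a, subset_closure haA⟩ : ↥(closure A)) ∈ Subtype.val ⁻¹' O := haO
      rw [hOW] at this
      simpa [hfbar a haA] using this
    refine ⟨phi1 A f a, haU, ?_⟩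
    have : phi1 A f a = phi2 A f (f ⟨a, haA⟩) := Quot.sound (GlueRel.glue a haA)
    rw [this]; exact haV
  -- contradiction via the continuous function ρ₁
  obtain ⟨x, hx1, hx2⟩ := hins (ρ₁ ⁻¹' Set.Ioi (1/2)) (ρ₁ ⁻¹' Set.Iio (1/2))
    (isOpen_Ioi.preimage hc₁) (isOpen_Iio.preimage hc₁)
    (by norm_num [Set.mem_preimage, hρ₁p]) (by norm_num [Set.mem_preimage, hρ₁q])
  simp only [Set.mem_preimage, Set.mem_Ioi, Set.mem_Iio] at hx1 hx2
  linarith
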